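/- arXiv:2505.13078 — 4 statements merged into one kernel-verified Lean document; each statement's English description precedes it below -/
import Mathlib

section
/- Suppose γAᵀA has restricted isometry constant δ on Σ−Σ, P_Σ is a generalized projection with restricted β-Lipschitz property with respect to Σ, and δβ < 1. Then for any x̂ ∈ Σ and any initialization x_0, the GPGD iterates x_{k+1} = P_Σ(x_k) − γAᵀ(A P_Σ(x_k) − y) with y = Ax̂ + e satisfy ||x_n − x̂|| ≤ (δβ)^n ||x_0 − x̂|| + (γ/(1−δβ)) ||Aᵀe||. -/
theorem gpgd_stable_linear_recovery {n m : ℕ} (S : Set (EuclideanSpace ℝ (Fin n)))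
    (A : EuclideanSpace ℝ (Fin n) →L[ℝ] EuclideanSpace ℝ (Fin m))
    (γ δ β : ℝ) (hγ : 0 ≤ γ) (hδ : 0 ≤ δ) (hβ : 0 ≤ β)
    (hRIC : ∀ x₁ ∈ S, ∀ x₂ ∈ S,
      ‖(x₁ - x₂) - γ • (ContinuousLinearMap.adjoint A) (A (x₁ - x₂))‖ ≤ δ * ‖x₁ - x₂‖)
    (P : EuclideanSpace ℝ (Fin n) → EuclideanSpace ℝ (Fin n))
    (hP : ∀ z, P z ∈ S)
    (hLip : ∀ z, ∀ x ∈ S, ‖P z - x‖ ≤ β * ‖z - x‖)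
    (hδβ : δ * β < 1)
    (xhat : EuclideanSpace ℝ (Fin n)) (hxhat : xhat ∈ S)
    (e y : EuclideanSpace ℝ (Fin m)) (hy : y = A xhat + e)
    (x : ℕ → EuclideanSpace ℝ (Fin n))
    (hiter : ∀ k, x (k + 1) = P (x k) - γ • (ContinuousLinearMap.adjoint A) (A (P (x k)) - y)) :
    ∀ N, ‖x N - xhat‖ ≤
      (δ * β) ^ N * ‖x 0 - xhat‖ + γ / (1 - δ * β) * ‖(ContinuousLinearMap.adjoint A) e‖ := by
  set r := δ * β with hr
  have hr0 : 0 ≤ r := mul_nonneg hδ hβ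
  have h1r : 0 < 1 - r := by linarith
  set C : ℝ := γ * ‖(ContinuousLinearMap.adjoint A) e‖ with hC
  have hC0 : 0 ≤ C := mul_nonneg hγ (norm_nonneg _)
  -- one-step bound
  have hstep : ∀ k, ‖x (k + 1) - xhat‖ ≤ r * ‖x k - xhat‖ + C := by
    intro k
    have hdecomp : x (k + 1) - xhat
        = ((P (x k) - xhat) - γ • (ContinuousLinearMap.adjoint A) (A (P (x k) - xhat)))
          + γ • (ContinuousLinearMap.adjoint A) e := by
      rw [hiter k, hy]
      have : A (P (x k)) - (A xhat + e) = A (P (x k) - xhat) - e := by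
        rw [map_sub]; abel
      rw [this, map_sub, smul_sub]
      abel
    calc ‖x (k + 1) - xhat‖
        ≤ ‖(P (x k) - xhat) - γ • (ContinuousLinearMap.adjoint A) (A (P (x k) - xhat))‖
          + ‖γ • (ContinuousLinearMap.adjoint A) e‖ := by
          rw [hdecomp]; exact norm_add_le _ _
      _ ≤ δ * ‖P (x k) - xhat‖ + C := by
          gcongr ?_ + ?_
          · exact hRIC _ (hP _) _ hxhat
          · rw [norm_smul, Real.norm_eq_abs, abs_of_nonneg hγ]
      _ ≤ δ * (β * ‖x k - xhat‖) + C := by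
          gcongr
          exact hLip _ _ hxhat
      _ = r * ‖x k - xhat‖ + C := by ring
  -- induction
  intro N
  have key : C / (1 - r) = γ / (1 - δ * β) * ‖(ContinuousLinearMap.adjoint A) e‖ := by
    rw [hC, ← hr]; ring
  rw [← key]
  induction N with
  | zero => simp [div_nonneg hC0 h1r.le]
  | succ N ih =>
    calc ‖x (N + 1) - xhat‖ ≤ r * ‖x N - xhat‖ + C := hstep N
      _ ≤ r * (r ^ N * ‖x 0 - xhat‖ + C / (1 - r)) + C := by gcongr
      _ = r ^ (N + 1) * ‖x 0 - xhat‖ + (r * (C / (1 - r)) + C) := by ring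
      _ = r ^ (N + 1) * ‖x 0 - xhat‖ + C / (1 - r) := by
          congr 1
          field_simp
          ring
end

section
/- Let x_i, x_k be unit vectors in ℝ^n and z ∈ ℝ^n with |⟨z, x_k⟩| < ||z||. Then (⟨x_k, z⟩² − ⟨x_i, z⟩²) / (||z||² − ⟨z, x_k⟩²) ≤ 2√(1 − ⟨x_k, x_i⟩²) / (1 − ⟨z/||z||, x_k⟩²). -/
open scoped InnerProductSpace

theorem inner_sq_diff_ratio_bound {n : ℕ} (xi xk z : EuclideanSpace ℝ (Fin n))
    (hxi : ‖xi‖ = 1) (hxk : ‖xk‖ = 1) (hz : |⟪z, xk⟫_ℝ| < ‖z‖) :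
    (⟪xk, z⟫_ℝ ^ 2 - ⟪xi, z⟫_ℝ ^ 2) / (‖z‖ ^ 2 - ⟪z, xk⟫_ℝ ^ 2)
      ≤ 2 * Real.sqrt (1 - ⟪xk, xi⟫_ℝ ^ 2) / (1 - ⟪‖z‖⁻¹ • z, xk⟫_ℝ ^ 2) := by
  have hzpos : (0:ℝ) < ‖z‖ := lt_of_le_of_lt (abs_nonneg _) hz
  have hden : (0:ℝ) < ‖z‖ ^ 2 - ⟪z, xk⟫_ℝ ^ 2 := by
    nlinarith [sq_abs ⟪z, xk⟫_ℝ, abs_nonneg ⟪z, xk⟫_ℝ]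
  set t := ⟪xk, xi⟫_ℝ with ht
  -- key norm product identity
  have hprod : ‖xk + xi‖ * ‖xk - xi‖ = 2 * Real.sqrt (1 - t ^ 2) := by
    have h1 : ‖xk + xi‖ ^ 2 = 2 + 2 * t := by
      rw [norm_add_sq_real]; rw [hxi, hxk]; ring
    have h2 : ‖xk - xi‖ ^ 2 = 2 - 2 * t := by
      rw [norm_sub_sq_real]; rw [hxi, hxk]; ring
    have hsq : (‖xk + xi‖ * ‖xk - xi‖) ^ 2 = 4 * (1 - t ^ 2) := by
      rw [mul_pow, h1, h2]; ring
    have h4 : 2 * Real.sqrt (1 - t ^ 2) = Real.sqrt (4 * (1 - t ^ 2)) := by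
      rw [Real.sqrt_mul (by norm_num : (0:ℝ) ≤ 4),
        show Real.sqrt 4 = 2 by
          rw [show (4:ℝ) = 2 ^ 2 by norm_num, Real.sqrt_sq (by norm_num : (0:ℝ) ≤ 2)]]
    rw [h4, ← hsq, Real.sqrt_sq (by positivity)]
  -- key bound: numerator ≤ 2√(1-t²)‖z‖²
  have hkey : ⟪xk, z⟫_ℝ ^ 2 - ⟪xi, z⟫_ℝ ^ 2 ≤ 2 * Real.sqrt (1 - t ^ 2) * ‖z‖ ^ 2 := by
    have hfac : ⟪xk, z⟫_ℝ ^ 2 - ⟪xi, z⟫_ℝ ^ 2 = ⟪xk + xi, z⟫_ℝ * ⟪xk - xi, z⟫_ℝ := by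
      rw [inner_add_left, inner_sub_left]; ring
    have hcs1 := abs_real_inner_le_norm (xk + xi) z
    have hcs2 := abs_real_inner_le_norm (xk - xi) z
    have : ⟪xk + xi, z⟫_ℝ * ⟪xk - xi, z⟫_ℝ ≤ (‖xk + xi‖ * ‖z‖) * (‖xk - xi‖ * ‖z‖) := by
      calc ⟪xk + xi, z⟫_ℝ * ⟪xk - xi, z⟫_ℝ ≤ |⟪xk + xi, z⟫_ℝ * ⟪xk - xi, z⟫_ℝ| := le_abs_self _
        _ = |⟪xk + xi, z⟫_ℝ| * |⟪xk - xi, z⟫_ℝ| := abs_mul _ _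
        _ ≤ (‖xk + xi‖ * ‖z‖) * (‖xk - xi‖ * ‖z‖) := by
            apply mul_le_mul hcs1 hcs2 (abs_nonneg _) (by positivity)
    rw [hfac]
    calc ⟪xk + xi, z⟫_ℝ * ⟪xk - xi, z⟫_ℝ ≤ (‖xk + xi‖ * ‖z‖) * (‖xk - xi‖ * ‖z‖) := this
      _ = (‖xk + xi‖ * ‖xk - xi‖) * ‖z‖ ^ 2 := by ring
      _ = 2 * Real.sqrt (1 - t ^ 2) * ‖z‖ ^ 2 := by rw [hprod]
  -- rewrite RHS denominator
  have hinner : ⟪‖z‖⁻¹ • z, xk⟫_ℝ = ‖z‖⁻¹ * ⟪z, xk⟫_ℝ := real_inner_smul_left z xk ‖z‖⁻¹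
  have hrden : 1 - ⟪‖z‖⁻¹ • z, xk⟫_ℝ ^ 2 = (‖z‖ ^ 2 - ⟪z, xk⟫_ℝ ^ 2) / ‖z‖ ^ 2 := by
    rw [hinner]; field_simp
  rw [hrden, div_div_eq_mul_div]
  exact (div_le_div_iff_of_pos_right hden).mpr hkey
end

section
/- Let x_i, x_k be unit vectors in ℝ^n and z ∈ ℝ^n with |⟨z, x_i⟩| ≤ |⟨z, x_k⟩| < ||z||. Then ||⟨x_i, z⟩ x_i − ⟨x_k, z⟩ x_k||² / (||z||² − ⟨z, x_k⟩²) ≤ 2√(1 − ⟨x_k, x_i⟩²) / (1 − ⟨z/||z||, x_k⟩²). -/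
open scoped InnerProductSpace

theorem proj_diff_sq_ratio_bound {n : ℕ} (xi xk z : EuclideanSpace ℝ (Fin n))
    (hxi : ‖xi‖ = 1) (hxk : ‖xk‖ = 1)
    (hik : |⟪z, xi⟫_ℝ| ≤ |⟪z, xk⟫_ℝ|) (hz : |⟪z, xk⟫_ℝ| < ‖z‖) :
    ‖⟪xi, z⟫_ℝ • xi - ⟪xk, z⟫_ℝ • xk‖ ^ 2 / (‖z‖ ^ 2 - ⟪z, xk⟫_ℝ ^ 2)
      ≤ 2 * Real.sqrt (1 - ⟪xk, xi⟫_ℝ ^ 2) / (1 - ⟪‖z‖⁻¹ • z, xk⟫_ℝ ^ 2) := by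
  set a := ⟪z, xi⟫_ℝ with ha
  set b := ⟪z, xk⟫_ℝ with hb
  set c := ⟪xk, xi⟫_ℝ with hc
  have hzpos : (0:ℝ) < ‖z‖ := lt_of_le_of_lt (abs_nonneg _) hz
  have hcle : |c| ≤ 1 := by
    have := abs_real_inner_le_norm xk xi
    rwa [hxi, hxk, one_mul] at this
  have hs0 : (0:ℝ) ≤ 1 - c ^ 2 := by nlinarith [sq_abs c, abs_nonneg c]
  set s := Real.sqrt (1 - c ^ 2) with hs
  have hsnn : 0 ≤ s := Real.sqrt_nonneg _
  have hssq : s ^ 2 = 1 - c ^ 2 := Real.sq_sqrt hs0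
  -- symmetric inner products
  have hia : ⟪xi, z⟫_ℝ = a := (real_inner_comm xi z).symm
  have hka : ⟪xk, z⟫_ℝ = b := (real_inner_comm xk z).symm
  -- numerator expansion
  have hnum : ‖⟪xi, z⟫_ℝ • xi - ⟪xk, z⟫_ℝ • xk‖ ^ 2 = a ^ 2 + b ^ 2 - 2 * a * b * c := by
    rw [hia, hka, norm_sub_sq_real, norm_smul, norm_smul]
    simp only [real_inner_smul_left, real_inner_smul_right, Real.norm_eq_abs, hxi, hxk]
    have : ⟪xi, xk⟫_ℝ = c := (real_inner_comm xi xk).symm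
    rw [this]
    rw [mul_pow, mul_pow, sq_abs, sq_abs]
    ring
  -- key bound: |b - a*c| ≤ ‖z‖ * s
  have hkey : |b - a * c| ≤ ‖z‖ * s := by
    have h1 : b - a * c = ⟪z, xk - c • xi⟫_ℝ := by
      rw [inner_sub_right, real_inner_smul_right]; ring
    have h2 : ‖xk - c • xi‖ = s := by
      have : ‖xk - c • xi‖ ^ 2 = 1 - c ^ 2 := by
        rw [norm_sub_sq_real, norm_smul, real_inner_smul_right, hxk,
          Real.norm_eq_abs, mul_pow, sq_abs]
        rw [show ⟪xk, xi⟫_ℝ = c from rfl, hxi]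
        ring
      rw [hs, ← this, Real.sqrt_sq (norm_nonneg _)]
    calc |b - a * c| = |⟪z, xk - c • xi⟫_ℝ| := by rw [h1]
      _ ≤ ‖z‖ * ‖xk - c • xi‖ := abs_real_inner_le_norm z _
      _ = ‖z‖ * s := by rw [h2]
  -- core numerator inequality
  have hcore : a ^ 2 + b ^ 2 - 2 * a * b * c ≤ 2 * s * ‖z‖ ^ 2 := by
    have ha2 : a ^ 2 ≤ b ^ 2 := by
      have := pow_le_pow_left₀ (abs_nonneg a) hik 2
      rwa [sq_abs, sq_abs] at this
    have hb1 : |b| ≤ ‖z‖ := hz.le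
    have h3 : |b| * |b - a * c| ≤ ‖z‖ * (‖z‖ * s) :=
      mul_le_mul hb1 hkey (abs_nonneg _) hzpos.le
    have h4 : b * (b - a * c) ≤ |b| * |b - a * c| := by
      rw [← abs_mul]; exact le_abs_self _
    nlinarith
  have hden : (0:ℝ) < ‖z‖ ^ 2 - b ^ 2 := by
    nlinarith [sq_abs b, sq_le_sq' (neg_abs_le b) (le_abs_self b), hz, abs_nonneg b]
  have hinner : ⟪‖z‖⁻¹ • z, xk⟫_ℝ = ‖z‖⁻¹ * b := by
    rw [real_inner_smul_left]
  have hrden : 1 - ⟪‖z‖⁻¹ • z, xk⟫_ℝ ^ 2 = (‖z‖ ^ 2 - b ^ 2) / ‖z‖ ^ 2 := by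
    rw [hinner]
    field_simp
  rw [hnum, hrden]
  rw [div_div_eq_mul_div]
  exact (div_le_div_iff_of_pos_right hden).mpr (by linarith [hcore])
end

section
/- Let Σ ⊂ ℝ^n be proximinal with restricted Lipschitz constant β^⊥ for its orthogonal projection, and P a generalized projection onto Σ. If there exists L ≥ 0 with ||P(z) − P_Σ^⊥(z)|| ≤ L||z − P_Σ^⊥(z)|| for all z, and γAᵀA has restricted isometry constant δ on Σ−Σ with δ(β^⊥ + L) < 1, then GPGD with projection P converges linearly at rate r = δ(β^⊥ + L): for x̂ ∈ Σ and y = Ax̂ + e, ||x_n − x̂|| ≤ r^n ||x_0 − x̂|| + γ||Aᵀe||/(1 − r). -/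
theorem gpgd_approx_orth_linear_convergence {n m : ℕ} (S : Set (EuclideanSpace ℝ (Fin n)))
    (Pperp P : EuclideanSpace ℝ (Fin n) → EuclideanSpace ℝ (Fin n))
    (hPperpS : ∀ z, Pperp z ∈ S)
    (hmin : ∀ z, ∀ x ∈ S, ‖z - Pperp z‖ ≤ ‖z - x‖)
    (βperp : ℝ) (hβperp0 : 0 ≤ βperp)
    (hβperp : ∀ z, ∀ x ∈ S, ‖Pperp z - x‖ ≤ βperp * ‖z - x‖)
    (hPS : ∀ z, P z ∈ S)
    (L : ℝ) (hL0 : 0 ≤ L)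
    (hL : ∀ z, ‖P z - Pperp z‖ ≤ L * ‖z - Pperp z‖)
    (A : EuclideanSpace ℝ (Fin n) →L[ℝ] EuclideanSpace ℝ (Fin m))
    (γ δ : ℝ) (hγ : 0 ≤ γ) (hδ : 0 ≤ δ)
    (hRIC : ∀ x₁ ∈ S, ∀ x₂ ∈ S,
      ‖(x₁ - x₂) - γ • (ContinuousLinearMap.adjoint A) (A (x₁ - x₂))‖ ≤ δ * ‖x₁ - x₂‖)
    (hrate : δ * (βperp + L) < 1)
    (xhat : EuclideanSpace ℝ (Fin n)) (hxhat : xhat ∈ S)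
    (e y : EuclideanSpace ℝ (Fin m)) (hy : y = A xhat + e)
    (x : ℕ → EuclideanSpace ℝ (Fin n))
    (hiter : ∀ k, x (k + 1) = P (x k) - γ • (ContinuousLinearMap.adjoint A) (A (P (x k)) - y)) :
    ∀ N, ‖x N - xhat‖ ≤ (δ * (βperp + L)) ^ N * ‖x 0 - xhat‖
      + γ * ‖(ContinuousLinearMap.adjoint A) e‖ / (1 - δ * (βperp + L)) := by
  set r : ℝ := δ * (βperp + L) with hr
  set c : ℝ := γ * ‖(ContinuousLinearMap.adjoint A) e‖ with hc
  have hr0 : 0 ≤ r := mul_nonneg hδ (by linarith)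
  have hc0 : 0 ≤ c := mul_nonneg hγ (norm_nonneg _)
  have h1r : 0 < 1 - r := by linarith
  have key : ∀ k, ‖x (k + 1) - xhat‖ ≤ r * ‖x k - xhat‖ + c := by
    intro k
    have heq : x (k + 1) - xhat =
        ((P (x k) - xhat) - γ • (ContinuousLinearMap.adjoint A) (A (P (x k) - xhat)))
          + γ • (ContinuousLinearMap.adjoint A) e := by
      rw [hiter k, hy]
      simp only [map_sub, map_add, smul_sub, smul_add]
      abel
    have h1 : ‖x (k + 1) - xhat‖ ≤ δ * ‖P (x k) - xhat‖ + c := by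
      rw [heq]
      refine le_trans (norm_add_le _ _) ?_
      have := hRIC (P (x k)) (hPS (x k)) xhat hxhat
      have h2 : ‖γ • (ContinuousLinearMap.adjoint A) e‖ = c := by
        rw [norm_smul, Real.norm_of_nonneg hγ]
      linarith
    have h3 : ‖P (x k) - xhat‖ ≤ (βperp + L) * ‖x k - xhat‖ := by
      have t1 : ‖P (x k) - xhat‖ ≤ ‖P (x k) - Pperp (x k)‖ + ‖Pperp (x k) - xhat‖ := by
        have := norm_add_le (P (x k) - Pperp (x k)) (Pperp (x k) - xhat)
        simpa using this
      have t2 := hL (x k)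
      have t3 := hβperp (x k) xhat hxhat
      have t4 := hmin (x k) xhat hxhat
      nlinarith [norm_nonneg (x k - Pperp (x k))]
    calc ‖x (k + 1) - xhat‖ ≤ δ * ‖P (x k) - xhat‖ + c := h1
      _ ≤ δ * ((βperp + L) * ‖x k - xhat‖) + c := by nlinarith
      _ = r * ‖x k - xhat‖ + c := by ring
  intro N
  induction N with
  | zero =>
    simp only [pow_zero, one_mul]
    have : 0 ≤ c / (1 - r) := div_nonneg hc0 h1r.le
    linarith
  | succ N ih =>
    have := key N
    have step : r * (r ^ N * ‖x 0 - xhat‖ + c / (1 - r)) + c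
        = r ^ (N + 1) * ‖x 0 - xhat‖ + (r * (c / (1 - r)) + c) := by ring
    have hrc : r * (c / (1 - r)) + c ≤ c / (1 - r) := by
      have : r * (c / (1 - r)) + c = c / (1 - r) := by
        field_simp
        ring
      linarith
    have hmono : r * ‖x (N) - xhat‖ ≤ r * (r ^ N * ‖x 0 - xhat‖ + c / (1 - r)) :=
      mul_le_mul_of_nonneg_left ih hr0
    calc ‖x (N + 1) - xhat‖ ≤ r * ‖x N - xhat‖ + c := this
      _ ≤ r * (r ^ N * ‖x 0 - xhat‖ + c / (1 - r)) + c := by linarith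
      _ = r ^ (N + 1) * ‖x 0 - xhat‖ + (r * (c / (1 - r)) + c) := step
      _ ≤ r ^ (N + 1) * ‖x 0 - xhat‖ + c / (1 - r) := by linarith
end
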